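/- Let Γ act transitively on a set Ω, let S be a finite generating set of Γ, and let ω₀ ∈ Ω. If there is a local embedding π of the word-metric ball B_S(n) ⊆ Γ into a finite group Q together with an injection θ : B_{S,ω₀}(n) → X into a finite Q-set X satisfying θ(ωg) = θ(ω)π(g) whenever ω, ωg ∈ B_{S,ω₀}(n) and g ∈ B_S(n), then |Sym(B_{S,ω₀}(n))| · |Q| ≥ |B_{S,ω₀}(n)|! and in particular any finite group admitting a local embedding of the radius-n ball of S(Γ,Ω) = FSym(Ω) ⋊ Γ with respect to the generating set S ∪ {(ω₀ ω₀s) : s ∈ S} has order at least |B_{S,ω₀}(n/16)|! for n ≥ 80. -/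

import Mathlib

/-!
Let `B` be the Schreier ball of radius `m = n / 16`. Conjugating the generators `(ω₀ ω₀s)` along
words shows that in the symmetric enrichment every star transposition `(ω₀ a)`, `a ∈ B`, has word
length at most `4m`, and every transposition `(a b)` of two points of `B` at most `10m`. Since
`14m ≤ n`, a local embedding `π` of the `n`-ball is injective on these transpositions, and
conjugation by `π (ω₀ a)` permutes the labels `π (a b)` exactly as `(ω₀ a)` permutes the pairs of
`B`. The pairs `(ρ, q) ∈ Sym(B) × Q` for which conjugation by `q` acts on labels as `ρ` acts on
pairs form a subgroup. It maps onto `Sym(B)`, because the star transpositions generate `Sym(B)`,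
and it embeds into `Q`, because a permutation of at least three points that commutes with every
transposition is trivial. Hence `|B|! ≤ |Q|`.
-/

/-- The ball of radius `n` in the word metric with respect to a set `S`. -/
def wordBall {G : Type*} [Group G] (S : Set G) (n : ℕ) : Set G :=
  {x | ∃ l : List G, l.length ≤ n ∧ (∀ y ∈ l, y ∈ S ∪ S⁻¹) ∧ l.prod = x}

/-- A local embedding of the subset `F` into `Q`: an injective partial homomorphism. -/
def IsLocalEmbedding {G Q : Type*} [Group G] [Group Q] (F : Set G) (π : G → Q) : Prop :=
  Set.InjOn π F ∧ ∀ g h : G, g ∈ F → h ∈ F → g * h ∈ F → π (g * h) = π g * π h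

/-- The ball of radius `n` about `ω₀` in the Schreier graph of `Γ ↷ Ω`. -/
def schreierBall {Γ Ω : Type*} [Group Γ] [MulAction Γ Ω] (S : Set Γ) (ω₀ : Ω) (n : ℕ) :
    Set Ω :=
  (fun g : Γ => g • ω₀) '' wordBall S n

/-- The group of finitely supported permutations of `Ω`. -/
def FSym (Ω : Type*) : Subgroup (Equiv.Perm Ω) where
  carrier := {σ | {x | σ x ≠ x}.Finite}
  one_mem' := by
    have h : {x : Ω | (1 : Equiv.Perm Ω) x ≠ x} = ∅ := by ext x; simp
    show ({x : Ω | (1 : Equiv.Perm Ω) x ≠ x}).Finite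
    rw [h]; exact Set.finite_empty
  mul_mem' := by
    intro σ τ hσ hτ
    apply (Set.Finite.union hσ hτ).subset
    intro x hx
    by_cases h : τ x = x
    · left
      simpa [Equiv.Perm.mul_apply, h] using hx
    · right; exact h
  inv_mem' := by
    intro σ hσ
    apply hσ.subset
    intro x hx
    simp only [Set.mem_setOf_eq] at hx ⊢
    intro h
    exact hx (σ.injective (by simp [h]))

instance FSym.normal (Ω : Type*) : (FSym Ω).Normal := by
  constructor
  intro σ hσ τ
  show {x | (τ * σ * τ⁻¹ : Equiv.Perm Ω) x ≠ x}.Finite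
  apply (Set.Finite.image τ hσ).subset
  intro x hx
  simp only [Set.mem_setOf_eq, Equiv.Perm.mul_apply] at hx
  refine ⟨τ⁻¹ x, ?_, by simp⟩
  intro h
  exact hx (by rw [h]; simp)

/-- The action of `Γ` on `FSym Ω` induced by an action of `Γ` on `Ω`. -/
def fsymConj (Γ Ω : Type*) [Group Γ] [MulAction Γ Ω] : Γ →* MulAut (FSym Ω) :=
  MulAut.conjNormal.comp (MulAction.toPermHom Γ Ω)

/-- The transposition `(a b)` as an element of `FSym Ω`. -/
def swapF {Ω : Type*} [DecidableEq Ω] (a b : Ω) : FSym Ω :=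
  ⟨Equiv.swap a b, by
    apply (Set.Finite.insert a (Set.finite_singleton b)).subset
    intro x hx
    rcases (Equiv.swap_apply_ne_self_iff.mp hx).2 with h | h <;> simp [h]⟩



open scoped Nat

section WordBall

variable {G : Type*} [Group G] {T : Set G} {a b n : ℕ} {x y : G}

theorem one_mem_wordBall (T : Set G) (n : ℕ) : (1 : G) ∈ wordBall T n :=
  ⟨[], by simp, by simp, rfl⟩

theorem wordBall_mono (h : a ≤ b) : wordBall T a ⊆ wordBall T b := by
  rintro x ⟨l, hl, hm, rfl⟩
  exact ⟨l, hl.trans h, hm, rfl⟩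

theorem mem_wordBall_one (hx : x ∈ T ∪ T⁻¹) : x ∈ wordBall T 1 :=
  ⟨[x], by simp, by simpa using hx, by simp⟩

theorem mul_mem_wordBall (hx : x ∈ wordBall T a) (hy : y ∈ wordBall T b) :
    x * y ∈ wordBall T (a + b) := by
  obtain ⟨l, hl, hm, rfl⟩ := hx
  obtain ⟨l', hl', hm', rfl⟩ := hy
  refine ⟨l ++ l', by simpa using Nat.add_le_add hl hl', ?_, List.prod_append⟩
  simpa only [List.mem_append, or_imp, forall_and] using ⟨hm, hm'⟩

theorem inv_mem_wordBall (hx : x ∈ wordBall T a) : x⁻¹ ∈ wordBall T a := by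
  obtain ⟨l, hl, hm, rfl⟩ := hx
  refine ⟨(l.map (·⁻¹)).reverse, by simpa using hl, ?_, (List.prod_inv_reverse l).symm⟩
  intro y hy
  simpa [or_comm] using hm y⁻¹ (by simpa using hy)

theorem conj_mem_wordBall (hx : x ∈ wordBall T a) (hy : y ∈ wordBall T b) :
    x * y * x⁻¹ ∈ wordBall T (a + b + a) :=
  mul_mem_wordBall (mul_mem_wordBall hx hy) (inv_mem_wordBall hx)

theorem map_mem_wordBall {H : Type*} [Group H] {T' : Set H} (f : G →* H)
    (hf : ∀ t ∈ T, f t ∈ T') (hx : x ∈ wordBall T n) : f x ∈ wordBall T' n := by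
  obtain ⟨l, hl, hm, rfl⟩ := hx
  refine ⟨l.map f, by simpa using hl, ?_, (map_list_prod f l).symm⟩
  simp only [List.mem_map, forall_exists_index, and_imp, forall_apply_eq_imp_iff₂]
  intro t ht
  rcases hm t ht with h | h
  · exact Or.inl (hf t h)
  · exact Or.inr (by simpa using hf _ h)

theorem finite_wordBall (hT : T.Finite) (n : ℕ) : (wordBall T n).Finite := by
  induction n with
  | zero =>
    refine (Set.finite_singleton 1).subset ?_
    rintro x ⟨l, hl, -, rfl⟩
    simp [List.length_eq_zero_iff.1 (Nat.le_zero.1 hl)]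
  | succ n ih =>
    refine (ih.union ((hT.union hT.inv).mul ih)).subset ?_
    rintro x ⟨_ | ⟨u, l⟩, hl, hm, rfl⟩
    · exact Or.inl (one_mem_wordBall T n)
    · refine Or.inr ⟨u, hm u (by simp), l.prod, ⟨l, by simpa using hl, ?_, rfl⟩, by simp⟩
      exact fun z hz => hm z (by simp [hz])

end WordBall

theorem IsLocalEmbedding.map_conj {G Q : Type*} [Group G] [Group Q] {F : Set G} {π : G → Q}
    (hπ : IsLocalEmbedding F π) {x y : G} (hx : x ∈ F) (hy : y ∈ F) (hxy : x * y ∈ F)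
    (hc : x * y * x⁻¹ ∈ F) : π (x * y * x⁻¹) = π x * π y * (π x)⁻¹ := by
  have h := hπ.2 _ _ hc hx (by simpa using hxy)
  rw [inv_mul_cancel_right, hπ.2 x y hx hy hxy] at h
  exact eq_mul_inv_of_mul_eq h.symm

namespace Equiv.Perm

variable {α : Type*} [DecidableEq α]

theorem eq_one_of_forall_swap_apply_apply_eq (hα : 2 < Nat.card α) {ρ : Perm α}
    (hρ : ∀ a b, swap (ρ a) (ρ b) = swap a b) : ρ = 1 := by
  have : Fintype α := @Fintype.ofFinite α (Nat.finite_of_card_ne_zero (by omega))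
  rw [Nat.card_eq_fintype_card] at hα
  obtain ⟨x, y, z, hxy, hxz, hyz⟩ := Fintype.two_lt_card_iff.1 hα
  ext a
  by_contra hne
  rw [Perm.one_apply] at hne
  -- evaluating `swap (ρ a) (ρ b) = swap a b` at `ρ a` forces `ρ a = b` for every `b ≠ a`
  have hmoved : ∀ b, b ≠ a → ρ a = b := by
    intro b hb
    have h := congrArg (· (ρ a)) (hρ a b)
    simp only [swap_apply_left, swap_apply_def] at h
    split_ifs at h with h1 h2
    · exact absurd h1 hne
    · exact h2
    · exact absurd (ρ.injective h) hb
  by_cases hx : x = a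
  · subst hx
    exact hyz ((hmoved y hxy.symm).symm.trans (hmoved z hxz.symm))
  by_cases hy : y = a
  · subst hy
    exact hxz ((hmoved x hxy).symm.trans (hmoved z hyz.symm))
  exact hxy ((hmoved x hx).symm.trans (hmoved y hy))

variable {Q : Type*} [Group Q]

def compatiblePairs (Θ : α → α → Q) : Subgroup (Perm α × Q) where
  carrier := {p | ∀ a b, p.2 * Θ a b * p.2⁻¹ = Θ (p.1 a) (p.1 b)}
  one_mem' := by simp
  mul_mem' := by
    intro p p' hp hp' a b
    simp only [Set.mem_ofPred_eq, Prod.fst_mul, Prod.snd_mul, mul_apply] at *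
    rw [← hp, ← hp']
    group
  inv_mem' := by
    intro p hp a b
    have h := hp (p.1⁻¹ a) (p.1⁻¹ b)
    simp only [Perm.coe_inv, apply_symm_apply] at h
    simp [← h, mul_assoc]

theorem fst_comp_subtype_compatiblePairs_surjective [Finite α] {Θ : α → α → Q} (x : α)
    (hstar : ∀ a, ∃ q, (swap x a, q) ∈ compatiblePairs Θ) :
    Function.Surjective ((MonoidHom.fst _ _).comp (compatiblePairs Θ).subtype) := by
  rw [← MonoidHom.range_eq_top, MonoidHom.range_comp, Subgroup.range_subtype, eq_top_iff,
    ← closure_isSwap, Subgroup.closure_le]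
  have hstar' : ∀ a, swap x a ∈ (compatiblePairs Θ).map (MonoidHom.fst _ _) := fun a =>
    let ⟨q, hq⟩ := hstar a
    ⟨_, hq, rfl⟩
  rintro _ ⟨a, b, -, rfl⟩
  exact SubmonoidClass.swap_mem_trans _ (swap_comm a x ▸ hstar' a) (hstar' b)

theorem snd_comp_subtype_compatiblePairs_injective (hα : 2 < Nat.card α) {Θ : α → α → Q}
    (hΘ : ∀ a b c d, Θ a b = Θ c d → swap a b = swap c d) :
    Function.Injective ((MonoidHom.snd _ _).comp (compatiblePairs Θ).subtype) := by
  refine (injective_iff_map_eq_one _).2 ?_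
  rintro ⟨⟨ρ, q⟩, hp⟩ (rfl : q = 1)
  have hρ : ρ = 1 := eq_one_of_forall_swap_apply_apply_eq hα fun a b =>
    (hΘ _ _ _ _ (by simpa using hp a b)).symm
  subst hρ
  rfl

theorem factorial_card_le_card_of_compatiblePairs [Finite α] [Finite Q] {Θ : α → α → Q}
    (hΘ : ∀ a b c d, Θ a b = Θ c d → swap a b = swap c d) (x : α)
    (hstar : ∀ a, ∃ q, (swap x a, q) ∈ compatiblePairs Θ) :
    (Nat.card α)! ≤ Nat.card Q := by
  rcases lt_or_ge 2 (Nat.card α) with hα | hα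
  · calc (Nat.card α)! = Nat.card (Perm α) := Nat.card_perm.symm
      _ ≤ Nat.card (compatiblePairs Θ) :=
        Nat.card_le_card_of_surjective _ (fst_comp_subtype_compatiblePairs_surjective x hstar)
      _ ≤ Nat.card Q :=
        Nat.card_le_card_of_injective _ (snd_comp_subtype_compatiblePairs_injective hα hΘ)
  · have hQ : 0 < Nat.card Q := Nat.card_pos
    interval_cases h : Nat.card α
    · exact hQ
    · exact hQ
    · obtain ⟨a, b, hab, -⟩ := Nat.card_eq_two_iff.1 h
      have hne : Θ a b ≠ Θ a a := fun h' => hab (swap_eq_one_iff.1 (by simpa using hΘ _ _ _ _ h'))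
      exact Finite.one_lt_card_iff_nontrivial.2 ⟨⟨_, _, hne⟩⟩

end Equiv.Perm

section SymEnrichment

open SemidirectProduct Equiv

abbrev SymEnrichment (Γ Ω : Type*) [Group Γ] [MulAction Γ Ω] := FSym Ω ⋊[fsymConj Γ Ω] Γ

variable {Γ Ω : Type*} [Group Γ] [MulAction Γ Ω] [DecidableEq Ω]

def enrichedGens (S : Set Γ) (ω₀ : Ω) : Set (SymEnrichment Γ Ω) :=
  (⇑inr '' S) ∪ {x | ∃ s ∈ S, x = inl (swapF ω₀ (s • ω₀))}

@[simp]
theorem swapF_self (a : Ω) : swapF a a = 1 :=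
  Subtype.ext (swap_self a)

theorem swapF_conj (p q a b : Ω) :
    swapF p q * swapF a b * (swapF p q)⁻¹ = swapF (swap p q a) (swap p q b) :=
  Subtype.ext (swap_apply_apply (swap p q) a b).symm

theorem inl_swapF_conj (p q a b : Ω) :
    (inl (swapF p q) * inl (swapF a b) * (inl (swapF p q))⁻¹ : SymEnrichment Γ Ω) =
      inl (swapF (swap p q a) (swap p q b)) := by
  rw [← map_inv, ← map_mul, ← map_mul, swapF_conj]

theorem inr_conj_inl_swapF (g : Γ) (a b : Ω) :
    (inr g * inl (swapF a b) * (inr g)⁻¹ : SymEnrichment Γ Ω) =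
      inl (swapF (g • a) (g • b)) := by
  rw [← map_inv, ← inl_aut]
  congr 1
  refine Subtype.ext ?_
  simpa [fsymConj, MulAut.conjNormal_apply, swapF] using
    (swap_apply_apply (MulAction.toPerm g) a b).symm

variable {S : Set Γ} {ω₀ : Ω} {g : Γ} {k m n : ℕ}

theorem inr_mem_wordBall_enrichedGens (hg : g ∈ wordBall S k) :
    (inr g : SymEnrichment Γ Ω) ∈ wordBall (enrichedGens S ω₀) k :=
  map_mem_wordBall _ (fun t ht => Or.inl ⟨t, ht, rfl⟩) hg

theorem inl_swapF_mem_wordBall_of_mem_wordBall (hSsymm : S⁻¹ = S) (hg : g ∈ wordBall S k) :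
    (inl (swapF ω₀ (g • ω₀)) : SymEnrichment Γ Ω) ∈ wordBall (enrichedGens S ω₀) (4 * k) := by
  obtain ⟨l, hl, hm, rfl⟩ := hg
  refine wordBall_mono (show 4 * l.length ≤ 4 * k by omega) ?_
  clear hl
  induction l with
  | nil => simpa using one_mem_wordBall _ 0
  | cons u e ih =>
    have hu : u ∈ S := by simpa [hSsymm] using hm u (by simp)
    rw [List.prod_cons, mul_smul]
    set z := e.prod • ω₀
    by_cases hz : z = ω₀
    · rw [hz]
      exact wordBall_mono (by simp; omega) (mem_wordBall_one (Or.inl (Or.inr ⟨u, hu, rfl⟩)))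
    by_cases huz : u • z = ω₀
    · simpa [huz] using one_mem_wordBall _ _
    have hgen : (inl (swapF ω₀ (u • ω₀)) : SymEnrichment Γ Ω) ∈ wordBall (enrichedGens S ω₀) 1 :=
      mem_wordBall_one (Or.inl (Or.inr ⟨u, hu, rfl⟩))
    have hinner := conj_mem_wordBall (inr_mem_wordBall_enrichedGens (ω₀ := ω₀)
      (mem_wordBall_one (Or.inl hu))) (ih fun v hv => hm v (by simp [hv]))
    rw [inr_conj_inl_swapF] at hinner
    have := conj_mem_wordBall hgen hinner
    rw [inl_swapF_conj, swap_apply_right,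
      swap_apply_of_ne_of_ne huz (fun h => hz (smul_left_cancel u h))] at this
    exact wordBall_mono (by simp; omega) this

theorem inl_swapF_mem_wordBall_of_mem_schreierBall (hSsymm : S⁻¹ = S) {a b : Ω}
    (ha : a ∈ schreierBall S ω₀ m) (hb : b ∈ schreierBall S ω₀ m) :
    (inl (swapF a b) : SymEnrichment Γ Ω) ∈ wordBall (enrichedGens S ω₀) (10 * m) := by
  obtain ⟨g, hg, rfl⟩ := ha
  obtain ⟨h, hh, rfl⟩ := hb
  have hgh := inl_swapF_mem_wordBall_of_mem_wordBall (ω₀ := ω₀) hSsymm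
    (mul_mem_wordBall (inv_mem_wordBall hg) hh)
  have := conj_mem_wordBall (inr_mem_wordBall_enrichedGens (ω₀ := ω₀) hg) hgh
  rw [inr_conj_inl_swapF, smul_smul, mul_inv_cancel_left] at this
  exact wordBall_mono (by omega) this

theorem factorial_ncard_schreierBall_le_card (hSfin : S.Finite) (hSsymm : S⁻¹ = S)
    (hmn : 14 * m ≤ n) {Q : Type*} [Group Q] [Finite Q] {π : SymEnrichment Γ Ω → Q}
    (hπ : IsLocalEmbedding (wordBall (enrichedGens S ω₀) n) π) :
    (schreierBall S ω₀ m).ncard ! ≤ Nat.card Q := by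
  set B := schreierBall S ω₀ m
  have : Finite B := ((finite_wordBall hSfin m).image _).to_subtype
  have hω₀ : ω₀ ∈ B := ⟨1, one_mem_wordBall S m, one_smul Γ ω₀⟩
  have hpair (a b : B) :
      (inl (swapF a b) : SymEnrichment Γ Ω) ∈ wordBall (enrichedGens S ω₀) (10 * m) :=
    inl_swapF_mem_wordBall_of_mem_schreierBall hSsymm a.2 b.2
  have hstar (a : B) :
      (inl (swapF ω₀ a) : SymEnrichment Γ Ω) ∈ wordBall (enrichedGens S ω₀) (4 * m) := by
    obtain ⟨g, hg, hga⟩ := a.2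
    rw [← hga]
    exact inl_swapF_mem_wordBall_of_mem_wordBall hSsymm hg
  have hball {k : ℕ} (hk : k ≤ n) := wordBall_mono (T := enrichedGens S ω₀) hk
  rw [← Nat.card_coe_set_eq]
  refine Perm.factorial_card_le_card_of_compatiblePairs
    (Θ := fun a b : B => π (inl (swapF a b))) ?_ ⟨ω₀, hω₀⟩ ?_
  · intro a b c d h
    have h' := congrArg Subtype.val
      (inl_injective (hπ.1 (hball (by omega) (hpair a b)) (hball (by omega) (hpair c d)) h))
    ext z
    simpa [swapF, Subtype.val_injective.swap_apply] using congrArg (· z) h'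
  · intro a
    refine ⟨π (inl (swapF ω₀ a)), fun b c => ?_⟩
    have hval (b : B) : ((swap ⟨ω₀, hω₀⟩ a b : B) : Ω) = swap ω₀ a b :=
      (Subtype.val_injective.swap_apply _ _ _).symm
    have hconj := inl_swapF_conj (Γ := Γ) ω₀ a b c
    rw [← hval, ← hval] at hconj
    dsimp only
    rw [← hconj, hπ.map_conj (hball (by omega) (hstar a)) (hball (by omega) (hpair b c))
      (hball (by omega) (mul_mem_wordBall (hstar a) (hpair b c)))
      (hconj ▸ hball (by omega) (hpair _ _))]

end SymEnrichment

theorem symEnrichment_lef_growth_lower_bound_general {Γ Ω : Type*} [Group Γ] [MulAction Γ Ω]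
    [DecidableEq Ω]
    (S : Set Γ) (hSfin : S.Finite) (hSsymm : S⁻¹ = S)
    (ω₀ : Ω) (n : ℕ) :
    (∀ (Q X : Type) (_ : Group Q) (_ : Fintype Q) (_ : Fintype X) (_ : MulAction Q X)
        (π : Γ → Q) (θ : Ω → X),
      IsLocalEmbedding (wordBall S n) π →
      Set.InjOn θ (schreierBall S ω₀ n) →
      (∀ g ∈ wordBall S n, ∀ ω ∈ schreierBall S ω₀ n,
        g • ω ∈ schreierBall S ω₀ n → θ (g • ω) = π g • θ ω) →
      Nat.factorial (schreierBall S ω₀ n).ncard * Fintype.card Q ≥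
        Nat.factorial (schreierBall S ω₀ n).ncard) ∧
    (80 ≤ n → ∀ (Q' : Type) (_ : Group Q') (_ : Fintype Q')
        (π' : (FSym Ω ⋊[fsymConj Γ Ω] Γ) → Q'),
      IsLocalEmbedding
        (wordBall ((⇑SemidirectProduct.inr '' S) ∪
          {x : FSym Ω ⋊[fsymConj Γ Ω] Γ | ∃ s ∈ S,
            x = SemidirectProduct.inl (swapF ω₀ (s • ω₀))}) n) π' →
      Nat.factorial (schreierBall S ω₀ (n / 16)).ncard ≤ Fintype.card Q') := by
  refine ⟨fun Q X _ _ _ _ π θ _ _ _ => Nat.le_mul_of_pos_right _ Fintype.card_pos, ?_⟩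
  intro _ Q' _ _ π' hπ'
  rw [← Nat.card_eq_fintype_card]
  exact factorial_ncard_schreierBall_le_card hSfin hSsymm (by omega) hπ'

/-- lower bound for the LEF growth of the symmetric enrichment
`S(Γ,Ω) = FSym(Ω) ⋊ Γ`.  First, if `(π, θ)` is a local embedding of the pair
`(B_S(n), B_{S,ω₀}(n))` into a finite action `(Q, X)`, then
`|Sym(B_{S,ω₀}(n))| · |Q| ≥ |B_{S,ω₀}(n)|!`.  In particular any finite group
admitting a local embedding of the radius-`n` ball of `S(Γ,Ω)` with respect to
the generating set `S ∪ {(ω₀ ω₀s) : s ∈ S}` has order at least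
`|B_{S,ω₀}(n/16)|!` for `n ≥ 80`. -/
theorem symEnrichment_lef_growth_lower_bound {Γ Ω : Type*} [Group Γ] [MulAction Γ Ω]
    [MulAction.IsPretransitive Γ Ω] [DecidableEq Ω]
    (S : Set Γ) (hSfin : S.Finite) (hSsymm : S⁻¹ = S) (hgen : Subgroup.closure S = ⊤)
    (ω₀ : Ω) (n : ℕ) :
    (∀ (Q X : Type) (_ : Group Q) (_ : Fintype Q) (_ : Fintype X) (_ : MulAction Q X)
        (π : Γ → Q) (θ : Ω → X),
      IsLocalEmbedding (wordBall S n) π →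
      Set.InjOn θ (schreierBall S ω₀ n) →
      (∀ g ∈ wordBall S n, ∀ ω ∈ schreierBall S ω₀ n,
        g • ω ∈ schreierBall S ω₀ n → θ (g • ω) = π g • θ ω) →
      Nat.factorial (schreierBall S ω₀ n).ncard * Fintype.card Q ≥
        Nat.factorial (schreierBall S ω₀ n).ncard) ∧
    (80 ≤ n → ∀ (Q' : Type) (_ : Group Q') (_ : Fintype Q')
        (π' : (FSym Ω ⋊[fsymConj Γ Ω] Γ) → Q'),
      IsLocalEmbedding
        (wordBall ((⇑SemidirectProduct.inr '' S) ∪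
          {x : FSym Ω ⋊[fsymConj Γ Ω] Γ | ∃ s ∈ S,
            x = SemidirectProduct.inl (swapF ω₀ (s • ω₀))}) n) π' →
      Nat.factorial (schreierBall S ω₀ (n / 16)).ncard ≤ Fintype.card Q') :=
  symEnrichment_lef_growth_lower_bound_general S hSfin hSsymm ω₀ n
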